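/- Let m, r ∈ ℕ, k ≥ 0, and let ζ ∈ C^{r−1}(I, ℝ^m) on an interval I ⊂ ℝ_{≥0}. Suppose there are constants μ_i^0 > 0, i = 1, …, r, with ‖ξ_i(χ(ζ)(t))‖ ≤ μ_i^0 for all t ∈ I and all i = 1, …, r. Define recursively μ_i^{j+1} := μ_{i+1}^{j} + k μ_i^{j} for i = 1, …, r and j = 0, …, r−i−1. Then for all i = 1, …, r, all j = 0, …, r−i, and all t ∈ I: ‖(d/dt)^j ξ_i(χ(ζ)(t))‖ ≤ μ_i^{j}. -/

import Mathlib

/-!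
Write `σʲ z` for the sequence `l ↦ z (l + j)`. Since `ξ₁(χ(ζ)(t)) = ζ(t)` and `ξ` is linear, differentiating
moves the window `χ(ζ)` one step along the derivatives of `ζ`, so `(d/dt)ʲ ξ_i(χ(ζ)(t)) = ξ_i(σʲ χ(ζ)(t))`
as long as `i + j ≤ r`. The recursion `ξ_{i+1}(σʲ z) = ξ_i(σʲ⁺¹ z) + k ξ_i(σʲ z)`, read backwards, gives
`‖ξ_i(σʲ⁺¹ z)‖ ≤ ‖ξ_{i+1}(σʲ z)‖ + k ‖ξ_i(σʲ z)‖`, which is exactly the recursion defining `μ_i^{j+1}`.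
-/

open Set

/-- The auxiliary error variables, `xi m k i` is `ξ_{i+1}` (0-based indexing):
`ξ₁(z) = z₁`, `ξ_{i+1}(z) = ξ_i(σ(z)) + k ξ_i(z)` where `σ` is the left shift. -/
noncomputable def xi (m : ℕ) (k : ℝ) : ℕ → (ℕ → EuclideanSpace ℝ (Fin m)) → EuclideanSpace ℝ (Fin m)
  | 0, z => z 0
  | i + 1, z => xi m k i (fun j => z (j + 1)) + k • xi m k i z

/-- `chiFam m r dζ t = χ(ζ)(t) = (ζ(t), ζ'(t), …, ζ^{(r−1)}(t)) ∈ ℝ^{rm}`,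
where `dζ j = ζ^{(j)}`; entries beyond index `r` are padded by zero. -/
noncomputable def chiFam (m r : ℕ) (dζ : ℕ → ℝ → EuclideanSpace ℝ (Fin m)) (t : ℝ) :
    ℕ → EuclideanSpace ℝ (Fin m) :=
  fun j => if j < r then dζ j t else 0

theorem iteratedDerivWithin_eq_of_hasDerivWithinAt_succ {E : Type*} [NormedAddCommGroup E]
    [NormedSpace ℝ E] {I : Set ℝ} (hI : UniqueDiffOn ℝ I) {f : ℕ → ℝ → E} {j : ℕ}
    (hf : ∀ l < j, ∀ t ∈ I, HasDerivWithinAt (f l) (f (l + 1) t) I t) :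
    ∀ t ∈ I, iteratedDerivWithin j (f 0) I t = f j t := by
  induction j with
  | zero => simp
  | succ j ih =>
    intro t ht
    have hEqOn : EqOn (iteratedDerivWithin j (f 0) I) (f j) I :=
      ih fun l hl => hf l (Nat.lt_succ_of_lt hl)
    rw [iteratedDerivWithin_succ, derivWithin_congr hEqOn (hEqOn ht)]
    exact (hf j j.lt_succ_self t ht).derivWithin (hI t ht)

section Xi

variable {m : ℕ} {k : ℝ}

theorem xi_succ_shift (n j : ℕ) (z : ℕ → EuclideanSpace ℝ (Fin m)) :
    xi m k (n + 1) (fun l => z (l + j)) =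
      xi m k n (fun l => z (l + (j + 1))) + k • xi m k n (fun l => z (l + j)) := by
  simp only [xi, Nat.add_right_comm _ 1 j, add_assoc]

theorem hasDerivWithinAt_xi {I : Set ℝ} {t : ℝ} (n : ℕ) {z : ℝ → ℕ → EuclideanSpace ℝ (Fin m)}
    {z' : ℕ → EuclideanSpace ℝ (Fin m)}
    (hz : ∀ l ≤ n, HasDerivWithinAt (fun s => z s l) (z' l) I t) :
    HasDerivWithinAt (fun s => xi m k n (z s)) (xi m k n z') I t := by
  induction n generalizing z z' with
  | zero => exact hz 0 le_rfl
  | succ n ih =>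
    have hshift := ih (z := fun s l => z s (l + 1)) (z' := fun l => z' (l + 1))
      fun l hl => hz (l + 1) (by omega)
    exact hshift.add ((ih fun l hl => hz l (by omega)).const_smul k)

theorem hasDerivWithinAt_xi_chiFam_shift {r : ℕ} {I : Set ℝ} {dζ : ℕ → ℝ → EuclideanSpace ℝ (Fin m)}
    (hder : ∀ j, j + 1 < r → ∀ t ∈ I, HasDerivWithinAt (dζ j) (dζ (j + 1) t) I t)
    {n j : ℕ} (hnj : n + j + 1 < r) {t : ℝ} (ht : t ∈ I) :
    HasDerivWithinAt (fun s => xi m k n (fun l => chiFam m r dζ s (l + j)))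
      (xi m k n (fun l => chiFam m r dζ t (l + (j + 1)))) I t := by
  refine hasDerivWithinAt_xi n fun l hl => ?_
  have hchi : (fun s => chiFam m r dζ s (l + j)) = dζ (l + j) := by
    funext s; exact if_pos (by omega)
  have hnext : chiFam m r dζ t (l + (j + 1)) = dζ (l + j + 1) t := if_pos (by omega)
  simp only [hchi, hnext]
  exact hder (l + j) (by omega) t ht

theorem norm_xi_shift_le {N : ℕ} (hk : 0 ≤ k) (z : ℕ → EuclideanSpace ℝ (Fin m))
    (μ : ℕ → ℕ → ℝ) (hbound0 : ∀ i, 1 ≤ i → i ≤ N → ‖xi m k (i - 1) z‖ ≤ μ i 0)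
    (hμrec : ∀ i j, 1 ≤ i → i ≤ N → j + 1 ≤ N - i → μ i (j + 1) = μ (i + 1) j + k * μ i j)
    (j : ℕ) : ∀ n, n + 1 + j ≤ N → ‖xi m k n (fun l => z (l + j))‖ ≤ μ (n + 1) j := by
  induction j with
  | zero => exact fun n hn => by simpa using hbound0 (n + 1) (by omega) (by omega)
  | succ j ih =>
    intro n hn
    have hback : xi m k n (fun l => z (l + (j + 1))) =
        xi m k (n + 1) (fun l => z (l + j)) - k • xi m k n (fun l => z (l + j)) := by
      rw [xi_succ_shift]; abel
    rw [hback, hμrec (n + 1) j (by omega) (by omega) (by omega)]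
    calc _ ≤ ‖xi m k (n + 1) (fun l => z (l + j))‖ + ‖k • xi m k n (fun l => z (l + j))‖ :=
          norm_sub_le _ _
      _ = ‖xi m k (n + 1) (fun l => z (l + j))‖ + k * ‖xi m k n (fun l => z (l + j))‖ := by
          rw [norm_smul, Real.norm_of_nonneg hk]
      _ ≤ μ (n + 1 + 1) j + k * μ (n + 1) j := by
          gcongr
          exacts [ih (n + 1) (by omega), ih n (by omega)]

end Xi

theorem stmt6_general (m r : ℕ) (k : ℝ) (hk : 0 ≤ k)
    (I : Set ℝ) (hIuniq : UniqueDiffOn ℝ I)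
    -- ζ ∈ C^{r−1}(I, ℝ^m) with dζ j = ζ^{(j)}:
    (dζ : ℕ → ℝ → EuclideanSpace ℝ (Fin m))
    (hder : ∀ j, j + 1 < r → ∀ t ∈ I, HasDerivWithinAt (dζ j) (dζ (j + 1) t) I t)
    (μ : ℕ → ℕ → ℝ)
    (hbound0 : ∀ i, 1 ≤ i → i ≤ r → ∀ t ∈ I, ‖xi m k (i - 1) (chiFam m r dζ t)‖ ≤ μ i 0)
    (hμrec : ∀ i j, 1 ≤ i → i ≤ r → j + 1 ≤ r - i → μ i (j + 1) = μ (i + 1) j + k * μ i j) :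
    ∀ i j, 1 ≤ i → i ≤ r → j ≤ r - i → ∀ t ∈ I,
      ‖iteratedDerivWithin j (fun s => xi m k (i - 1) (chiFam m r dζ s)) I t‖ ≤ μ i j := by
  intro i j hi hir hj t ht
  obtain ⟨n, rfl⟩ : ∃ n, i = n + 1 := ⟨i - 1, by omega⟩
  have hderiv : iteratedDerivWithin j (fun s => xi m k n (chiFam m r dζ s)) I t =
      xi m k n (fun l => chiFam m r dζ t (l + j)) :=
    iteratedDerivWithin_eq_of_hasDerivWithinAt_succ (j := j)
      (f := fun j s => xi m k n (fun l => chiFam m r dζ s (l + j))) hIuniq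
      (fun l hl _ hs => hasDerivWithinAt_xi_chiFam_shift hder (by omega) hs) t ht
  rw [Nat.add_sub_cancel, hderiv]
  exact norm_xi_shift_le hk _ μ (fun i hi hir => hbound0 i hi hir t ht) hμrec j n (by omega)

/-- If `‖ξ_i(χ(ζ)(t))‖ ≤ μ_i^0` on `I` and `μ_i^{j+1} = μ_{i+1}^j + k μ_i^j`, then
`‖(d/dt)^j ξ_i(χ(ζ)(t))‖ ≤ μ_i^j` for all `i = 1,…,r`, `j = 0,…,r−i`, `t ∈ I`
(here `ξ_i = xi m k (i-1)` and `μ i j` denotes `μ_i^j`). -/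
theorem stmt6 (m r : ℕ) (hr : 1 ≤ r) (k : ℝ) (hk : 0 ≤ k)
    (I : Set ℝ) (hI0 : I ⊆ Ici (0 : ℝ)) (hIconn : I.OrdConnected) (hIuniq : UniqueDiffOn ℝ I)
    -- ζ ∈ C^{r−1}(I, ℝ^m) with dζ j = ζ^{(j)}:
    (dζ : ℕ → ℝ → EuclideanSpace ℝ (Fin m))
    (hcont : ∀ j, j < r → ContinuousOn (dζ j) I)
    (hder : ∀ j, j + 1 < r → ∀ t ∈ I, HasDerivWithinAt (dζ j) (dζ (j + 1) t) I t)
    (μ : ℕ → ℕ → ℝ)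
    (hμpos : ∀ i, 1 ≤ i → i ≤ r → 0 < μ i 0)
    (hbound0 : ∀ i, 1 ≤ i → i ≤ r → ∀ t ∈ I, ‖xi m k (i - 1) (chiFam m r dζ t)‖ ≤ μ i 0)
    (hμrec : ∀ i j, 1 ≤ i → i ≤ r → j + 1 ≤ r - i → μ i (j + 1) = μ (i + 1) j + k * μ i j) :
    ∀ i j, 1 ≤ i → i ≤ r → j ≤ r - i → ∀ t ∈ I,
      ‖iteratedDerivWithin j (fun s => xi m k (i - 1) (chiFam m r dζ s)) I t‖ ≤ μ i j :=
  stmt6_general m r k hk I hIuniq dζ hder μ hbound0 hμrec
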